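/- arXiv:1106.0144 — 2 statements merged into one kernel-verified Lean document; each statement's English description precedes it below -/
import Mathlib

section
/- Let H1, ..., Hm be real Hilbert spaces (m ≥ 2), G a real Hilbert space, Lᵢ : Hᵢ → G bounded linear operators with cyclic convention L_{m+1} = L₁ and x_{m+1} = x₁, and set χ = 2·max_{1≤i≤m} ‖Lᵢ‖². Then the operator B : H₁ ⊕ ⋯ ⊕ H_m → H₁ ⊕ ⋯ ⊕ H_m given by B(x₁,...,x_m) = (L₁*(L₁x₁ − L₂x₂), ..., L_m*(L_mx_m − L₁x₁)) is χ⁻¹-cocoercive, i.e., for all x, y in the product space, ⟨x − y, Bx − By⟩ ≥ χ⁻¹‖Bx − By‖². -/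
/-!
With `z = x - y` and `uᵢ = Lᵢ zᵢ`, linearity gives `(Bx − By)ᵢ = Lᵢ*(uᵢ − uᵢ₊₁)`, so
`⟨x − y, Bx − By⟩ = Σᵢ ⟨uᵢ, uᵢ − uᵢ₊₁⟩`. Because the shift `i ↦ i + 1` permutes the indices,
this sum equals `½ Σᵢ ‖uᵢ − uᵢ₊₁‖²`, while `‖Lᵢ*(uᵢ − uᵢ₊₁)‖² ≤ ‖Lᵢ‖² ‖uᵢ − uᵢ₊₁‖²`.
Comparing termwise against `χ = 2 maxᵢ ‖Lᵢ‖²` gives the claim.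
-/

open RealInnerProductSpace ContinuousLinearMap

theorem sum_inner_sub_perm_eq_half_sum_norm_sq {ι E : Type*} [Fintype ι]
    [NormedAddCommGroup E] [InnerProductSpace ℝ E] (σ : Equiv.Perm ι) (u : ι → E) :
    ∑ i, ⟪u i, u i - u (σ i)⟫ = 2⁻¹ * ∑ i, ‖u i - u (σ i)‖ ^ 2 := by
  have hperm : ∑ i, ‖u (σ i)‖ ^ 2 = ∑ i, ‖u i‖ ^ 2 := Equiv.sum_comp σ fun i => ‖u i‖ ^ 2
  simp only [inner_sub_right, real_inner_self_eq_norm_sq, norm_sub_sq_real,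
    Finset.sum_sub_distrib, Finset.sum_add_distrib, hperm, ← Finset.mul_sum]
  ring

theorem norm_adjoint_apply_sq_le {E F : Type*} [NormedAddCommGroup E] [InnerProductSpace ℝ E]
    [CompleteSpace E] [NormedAddCommGroup F] [InnerProductSpace ℝ F] [CompleteSpace F]
    (A : E →L[ℝ] F) (w : F) : ‖adjoint A w‖ ^ 2 ≤ ‖A‖ ^ 2 * ‖w‖ ^ 2 := by
  rw [← mul_pow, ← adjoint.norm_map A]
  gcongr
  exact le_opNorm _ _

-- For `M = 0` the left side is `0` because `0⁻¹ = 0` in `ℝ`.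
theorem inv_two_mul_mul_le_inv_two {a M : ℝ} (ha : 0 ≤ a) (haM : a ≤ M) :
    (2 * M)⁻¹ * a ≤ 2⁻¹ := by
  rcases (ha.trans haM).eq_or_lt with hM | hM
  · simp [← hM]
  · rw [inv_mul_le_iff₀ (by positivity)]
    linarith

theorem cocoercive_adjoint_sub_perm {ι G : Type*} [Fintype ι]
    [NormedAddCommGroup G] [InnerProductSpace ℝ G] [CompleteSpace G]
    {H : ι → Type*} [∀ i, NormedAddCommGroup (H i)] [∀ i, InnerProductSpace ℝ (H i)]
    [∀ i, CompleteSpace (H i)] (L : ∀ i, H i →L[ℝ] G) (σ : Equiv.Perm ι)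
    {M : ℝ} (hM : ∀ i, ‖L i‖ ^ 2 ≤ M) (z : ∀ i, H i) :
    (2 * M)⁻¹ * ∑ i, ‖adjoint (L i) (L i (z i) - L (σ i) (z (σ i)))‖ ^ 2 ≤
      ∑ i, ⟪z i, adjoint (L i) (L i (z i) - L (σ i) (z (σ i)))⟫ := by
  set u : ι → G := fun i => L i (z i)
  have hinner : ∑ i, ⟪z i, adjoint (L i) (u i - u (σ i))⟫ = ∑ i, ⟪u i, u i - u (σ i)⟫ :=
    Finset.sum_congr rfl fun i _ => adjoint_inner_right _ _ _
  change _ * ∑ i, ‖adjoint (L i) (u i - u (σ i))‖ ^ 2 ≤ _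
  rw [hinner, sum_inner_sub_perm_eq_half_sum_norm_sq, Finset.mul_sum, Finset.mul_sum]
  refine Finset.sum_le_sum fun i _ => ?_
  calc (2 * M)⁻¹ * ‖adjoint (L i) (u i - u (σ i))‖ ^ 2
      ≤ (2 * M)⁻¹ * ‖L i‖ ^ 2 * ‖u i - u (σ i)‖ ^ 2 := by
        rw [mul_assoc]
        gcongr
        · exact inv_nonneg.2 (by linarith [hM i, sq_nonneg ‖L i‖])
        · exact norm_adjoint_apply_sq_le _ _
    _ ≤ 2⁻¹ * ‖u i - u (σ i)‖ ^ 2 := by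
        gcongr
        exact inv_two_mul_mul_le_inv_two (sq_nonneg _) (hM i)

theorem stmt3_general {m : ℕ} [NeZero m]
    {G : Type*} [NormedAddCommGroup G] [InnerProductSpace ℝ G] [CompleteSpace G]
    {H : Fin m → Type*} [∀ i, NormedAddCommGroup (H i)] [∀ i, InnerProductSpace ℝ (H i)]
    [∀ i, CompleteSpace (H i)]
    (L : ∀ i, H i →L[ℝ] G)
    (B : (∀ i, H i) → ∀ i, H i)
    (hB : ∀ x i, B x i = (ContinuousLinearMap.adjoint (L i))
      (L i (x i) - L (i + 1) (x (i + 1))))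
    (χ : ℝ)
    (hχ : χ = 2 * (Finset.univ.sup' (Finset.univ_nonempty) fun i => ‖L i‖ ^ 2)) :
    ∀ x y : ∀ i, H i,
      χ⁻¹ * ∑ i, ‖B x i - B y i‖ ^ 2 ≤ ∑ i, ⟪x i - y i, B x i - B y i⟫ := by
  intro x y
  have hBsub : ∀ i, B x i - B y i =
      adjoint (L i) (L i ((x - y) i) - L (i + 1) ((x - y) (i + 1))) := by
    intro i
    simp only [hB, Pi.sub_apply, map_sub]
    abel
  simp only [hBsub, hχ]
  exact cocoercive_adjoint_sub_perm L (Equiv.addRight 1)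
    (fun i => Finset.le_sup' (fun j => ‖L j‖ ^ 2) (Finset.mem_univ i)) (x - y)

/-- The cyclic difference operator
`B(x₁,…,x_m) = (L₁*(L₁x₁ − L₂x₂), …, L_m*(L_mx_m − L₁x₁))` is `χ⁻¹`-cocoercive with
`χ = 2 maxᵢ ‖Lᵢ‖²`. -/
theorem stmt3 {m : ℕ} [NeZero m] (hm : 2 ≤ m)
    {G : Type*} [NormedAddCommGroup G] [InnerProductSpace ℝ G] [CompleteSpace G]
    {H : Fin m → Type*} [∀ i, NormedAddCommGroup (H i)] [∀ i, InnerProductSpace ℝ (H i)]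
    [∀ i, CompleteSpace (H i)]
    (L : ∀ i, H i →L[ℝ] G) (hL : ∀ i, L i ≠ 0)
    (B : (∀ i, H i) → ∀ i, H i)
    (hB : ∀ x i, B x i = (ContinuousLinearMap.adjoint (L i))
      (L i (x i) - L (i + 1) (x (i + 1))))
    (χ : ℝ)
    (hχ : χ = 2 * (Finset.univ.sup' (Finset.univ_nonempty) fun i => ‖L i‖ ^ 2)) :
    ∀ x y : ∀ i, H i,
      χ⁻¹ * ∑ i, ‖B x i - B y i‖ ^ 2 ≤ ∑ i, ⟪x i - y i, B x i - B y i⟫ :=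
  stmt3_general L B hB χ hχ
end

section
/- Let H be a real Hilbert space, let A : H → 2^H be maximally monotone, and let B : H → H be monotone and χ-Lipschitzian with zer(A + B) ≠ ∅. Define one exact iteration of the forward-backward-forward scheme: given x and γ ∈ (0, 1/χ), set y = x − γ Bx, p = J_{γA} y, q = p − γ Bp, and x⁺ = x − y + q. Then for every z ∈ zer(A + B), ‖x⁺ − z‖² ≤ ‖x − z‖² − (1 − γ²χ²)‖x − p‖². (Fejér-type decrease of the Tseng iteration.) -/
/-!
Put `e = γ(Bx − Bp)`, so that `x⁺ = p + e`. Expanding squares gives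
`‖x⁺ − z‖² = ‖x − z‖² − 2⟪p − z, x − p − e⟫ − ‖x − p‖² + ‖e‖²`.
Since `x − γBx − p = γw` with `w ∈ Ap`, we have `x − p − e = γ((w + Bp) − (−Bz + Bz))`, a multiple
of a difference of values of `A + B` at `p` and at `z`; so the inner product is nonnegative by
monotonicity, and `‖e‖ ≤ γχ‖x − p‖` because `B` is Lipschitz.
-/

open RealInnerProductSpace

section

variable {H : Type*} [NormedAddCommGroup H] [InnerProductSpace ℝ H]

theorem norm_add_sub_sq_eq (x p z e : H) :
    ‖p + e - z‖ ^ 2 = ‖x - z‖ ^ 2 - 2 * ⟪p - z, x - p - e⟫ - ‖x - p‖ ^ 2 + ‖e‖ ^ 2 := by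
  have hpe : p + e - z = (p - z) + e := by abel
  have hx : x - z = (p - z) + (x - p) := by abel
  rw [hpe, hx, norm_add_sq_real, norm_add_sq_real, inner_sub_right (p - z) (x - p) e]
  ring

theorem inner_add_sub_add_nonneg_of_monotone {A : H → Set H}
    (hA : ∀ x y u v : H, u ∈ A x → v ∈ A y → 0 ≤ ⟪x - y, u - v⟫)
    {B : H → H} (hB : ∀ x y : H, 0 ≤ ⟪x - y, B x - B y⟫)
    {x y u v : H} (hu : u ∈ A x) (hv : v ∈ A y) :
    0 ≤ ⟪x - y, (u + B x) - (v + B y)⟫ := by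
  rw [add_sub_add_comm, inner_add_right]
  exact add_nonneg (hA x y u v hu hv) (hB x y)

theorem sq_norm_smul_sub_le_of_lipschitz {B : H → H} {χ : ℝ}
    (hB : ∀ x y : H, ‖B x - B y‖ ≤ χ * ‖x - y‖) (γ : ℝ) (x y : H) :
    ‖γ • (B x - B y)‖ ^ 2 ≤ γ ^ 2 * χ ^ 2 * ‖x - y‖ ^ 2 := by
  have h := pow_le_pow_left₀ (norm_nonneg _) (hB x y) 2
  rw [norm_smul, mul_pow, Real.norm_eq_abs, sq_abs]
  nlinarith [sq_nonneg γ]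

end

theorem stmt17_general
    {H : Type*} [NormedAddCommGroup H] [InnerProductSpace ℝ H]
    (A : H → Set H)
    (hAmono : ∀ x y u v : H, u ∈ A x → v ∈ A y → 0 ≤ ⟪x - y, u - v⟫)
    (B : H → H) (χ : ℝ)
    (hBmono : ∀ x y : H, 0 ≤ ⟪x - y, B x - B y⟫)
    (hBlip : ∀ x y : H, ‖B x - B y‖ ≤ χ * ‖x - y‖)
    (γ : ℝ) (hγ0 : 0 < γ)
    (x p : H)
    -- `p = J_{γA}(x − γBx)`, i.e. `x − γBx − p ∈ γ A p`
    (hp : ∃ w ∈ A p, x - γ • B x - p = γ • w)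
    (z : H) (hz : -(B z) ∈ A z) :
    ‖(x - (x - γ • B x) + (p - γ • B p)) - z‖ ^ 2 ≤
      ‖x - z‖ ^ 2 - (1 - γ ^ 2 * χ ^ 2) * ‖x - p‖ ^ 2 := by
  obtain ⟨w, hw, hweq⟩ := hp
  have hstep : x - (x - γ • B x) + (p - γ • B p) = p + γ • (B x - B p) := by module
  have hmono : 0 ≤ ⟪p - z, x - p - γ • (B x - B p)⟫ := by
    have hdir : x - p - γ • (B x - B p) = γ • ((w + B p) - (-(B z) + B z)) := by
      rw [neg_add_cancel, sub_zero, smul_add, ← hweq]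
      module
    rw [hdir, real_inner_smul_right]
    exact mul_nonneg hγ0.le (inner_add_sub_add_nonneg_of_monotone hAmono hBmono hw hz)
  have hlip := sq_norm_smul_sub_le_of_lipschitz hBlip γ x p
  rw [hstep, norm_add_sub_sq_eq x]
  linarith

/-- Fejér-type decrease of one exact Tseng (forward-backward-forward) iteration:
with `y = x − γBx`, `p = J_{γA}y`, `q = p − γBp`, `x⁺ = x − y + q`, one has
`‖x⁺ − z‖² ≤ ‖x − z‖² − (1 − γ²χ²)‖x − p‖²` for every `z ∈ zer(A+B)`. -/
theorem stmt17
    {H : Type*} [NormedAddCommGroup H] [InnerProductSpace ℝ H] [CompleteSpace H]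
    (A : H → Set H)
    (hAmono : ∀ x y u v : H, u ∈ A x → v ∈ A y → 0 ≤ ⟪x - y, u - v⟫)
    (hAmax : ∀ x u, (∀ y, ∀ v ∈ A y, 0 ≤ ⟪x - y, u - v⟫) → u ∈ A x)
    (B : H → H) (χ : ℝ) (hχ : 0 < χ)
    (hBmono : ∀ x y : H, 0 ≤ ⟪x - y, B x - B y⟫)
    (hBlip : ∀ x y : H, ‖B x - B y‖ ≤ χ * ‖x - y‖)
    (γ : ℝ) (hγ0 : 0 < γ) (hγ1 : γ < 1 / χ)
    (x p : H)
    -- `p = J_{γA}(x − γBx)`, i.e. `x − γBx − p ∈ γ A p`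
    (hp : ∃ w ∈ A p, x - γ • B x - p = γ • w)
    (z : H) (hz : -(B z) ∈ A z) :
    ‖(x - (x - γ • B x) + (p - γ • B p)) - z‖ ^ 2 ≤
      ‖x - z‖ ^ 2 - (1 - γ ^ 2 * χ ^ 2) * ‖x - p‖ ^ 2 :=
  stmt17_general A hAmono B χ hBmono hBlip γ hγ0 x p hp z hz
end
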